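/- arXiv:2006.05660 — 2 statements merged into one kernel-verified Lean document; each statement's English description precedes it below -/
import Mathlib

section
/- Let {0} = Λ₀ ⊂ Λ₁ ⊂ ⋯ ⊂ Λ_k = Λ be a filtration of a lattice Λ by pure sublattices, and for 1 ≤ i ≤ k let Q_i = Λ_i/Λ_{i−1} denote the quotient lattice, i.e. the image of Λ_i under the orthogonal projection onto the orthogonal complement of span(Λ_{i−1}). Then for every target t ∈ span(Λ) there exists a lattice vector x ∈ Λ such that ‖x − t‖² ≤ Σ_{i=1}^k μ(Q_i)². -/
/-!
Babai's nearest-plane argument, run along the filtration. Let `W` be the span of `Λ_{i-1}` and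
`π` the orthogonal projection onto `Wᗮ`. For `t ∈ span Λ_i`, `x₀ ∈ Λ_i` and `y ∈ Λ_{i-1}`, the
error `x₀ + y - t` splits orthogonally into `π x₀ - π t` and a `W`-component which, by induction,
`y` can make as short as `Λ_{i-1}` allows. Taking the infimum over `x₀` bounds the first part by
`dist(π t, Q_i) ≤ μ(Q_i)`. Working with `infDist` throughout postpones the question of attainment
to the very end, where `Λ` is closed because it is discrete.
-/

open scoped RealInnerProductSpace
open Metric

noncomputable section

variable {E : Type*} [NormedAddCommGroup E] [InnerProductSpace ℝ E] [FiniteDimensional ℝ E]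

/-- `L ⊆ E` is a lattice of rank `n`: it is generated (over `ℤ`) by `n`
`ℝ`-linearly independent vectors. -/
def IsLatticeOfRank (L : Submodule ℤ E) (n : ℕ) : Prop :=
  ∃ b : Fin n → E, LinearIndependent ℝ b ∧ L = Submodule.span ℤ (Set.range b)

/-- The real span of a lattice. -/
def latSpan (L : Submodule ℤ E) : Submodule ℝ E := Submodule.span ℝ (L : Set E)

/-- The covering radius of a lattice, computed inside its real span. -/
def covRad (L : Submodule ℤ E) : ℝ :=
  ⨆ x : latSpan L, infDist (x : E) (L : Set E)

/-- `L'` is a pure sublattice of `L`: the quotient is torsion-free. -/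
def IsPureIn (L' L : Submodule ℤ E) : Prop :=
  L' ≤ L ∧ ∀ v ∈ L, ∀ m : ℤ, m ≠ 0 → m • v ∈ L' → v ∈ L'

/-- Orthogonal projection of `E` onto the orthogonal complement of the span
of `L'`, as a `ℤ`-linear endomorphism of `E`. -/
def projPerp (L' : Submodule ℤ E) : E →ₗ[ℤ] E :=
  ((latSpan L')ᗮ.subtype.comp (Submodule.orthogonalProjection (latSpan L')ᗮ).toLinearMap).restrictScalars ℤ

/-- The quotient lattice `L/L'`, realized as the image of `L` under the
orthogonal projection onto the orthogonal complement of the span of `L'`. -/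
def quotLat (L L' : Submodule ℤ E) : Submodule ℤ E := L.map (projPerp L')

end

section

variable {E : Type*} [NormedAddCommGroup E] [InnerProductSpace ℝ E]

theorem le_infDist_sq_of_forall_le_dist_sq {α : Type*} [PseudoMetricSpace α] {s : Set α}
    (hs : s.Nonempty) {p : α} {a : ℝ} (h : ∀ q ∈ s, a ≤ dist p q ^ 2) : a ≤ infDist p s ^ 2 := by
  have : √a ≤ infDist p s :=
    (le_infDist hs).mpr fun q hq => Real.sqrt_le_iff.mpr ⟨dist_nonneg, h q hq⟩
  exact (Real.sqrt_le_iff.mp this).2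

theorem bddAbove_infDist_latSpan {M : Submodule ℤ E} (hM : M.FG) :
    BddAbove (Set.range fun x : latSpan M => infDist (x : E) (M : Set E)) := by
  obtain ⟨s, rfl⟩ := hM
  refine ⟨∑ v ∈ s, ‖v‖, ?_⟩
  rintro _ ⟨⟨x, hx⟩, rfl⟩
  rw [latSpan, Submodule.span_span_of_tower] at hx
  obtain ⟨f, -, rfl⟩ := Submodule.mem_span_finset.mp hx
  have hz : ∑ v ∈ s, ⌊f v⌋ • v ∈ Submodule.span ℤ (s : Set E) :=
    Submodule.sum_mem _ fun v hv => Submodule.smul_mem _ _ (Submodule.subset_span hv)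
  have hfract : ∑ v ∈ s, f v • v - ∑ v ∈ s, ⌊f v⌋ • v = ∑ v ∈ s, Int.fract (f v) • v := by
    rw [← Finset.sum_sub_distrib]
    refine Finset.sum_congr rfl fun v _ => ?_
    rw [← Int.cast_smul_eq_zsmul ℝ, ← sub_smul, Int.fract]
  calc infDist (∑ v ∈ s, f v • v) _ ≤ ‖∑ v ∈ s, Int.fract (f v) • v‖ := by
        rw [← hfract, ← dist_eq_norm]; exact infDist_le_dist_of_mem hz
    _ ≤ ∑ v ∈ s, ‖Int.fract (f v) • v‖ := norm_sum_le _ _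
    _ ≤ ∑ v ∈ s, ‖v‖ := Finset.sum_le_sum fun v _ => by
        rw [norm_smul, Real.norm_of_nonneg (Int.fract_nonneg _)]
        exact mul_le_of_le_one_left (norm_nonneg v) (Int.fract_lt_one _).le

theorem infDist_le_covRad {M : Submodule ℤ E} (hM : M.FG) {x : E} (hx : x ∈ latSpan M) :
    infDist x (M : Set E) ≤ covRad M :=
  le_ciSup (f := fun y : latSpan M => infDist (y : E) (M : Set E))
    (bddAbove_infDist_latSpan hM) ⟨x, hx⟩

theorem infDist_bot_eq_zero_of_mem_latSpan {t : E} (ht : t ∈ latSpan (⊥ : Submodule ℤ E)) :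
    infDist t ((⊥ : Submodule ℤ E) : Set E) = 0 := by
  obtain rfl : t = 0 := by simpa [latSpan] using ht
  simp

theorem IsLatticeOfRank.fg {L : Submodule ℤ E} {n : ℕ} (hL : IsLatticeOfRank L n) : L.FG := by
  obtain ⟨b, -, rfl⟩ := hL
  exact Submodule.fg_span (Set.finite_range b)

variable [FiniteDimensional ℝ E]

theorem coe_projPerp (M : Submodule ℤ E) : ⇑(projPerp M) = (latSpan M)ᗮ.starProjection := rfl

theorem projPerp_mem_latSpan_quotLat (L M : Submodule ℤ E) {t : E} (ht : t ∈ latSpan L) :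
    projPerp M t ∈ latSpan (quotLat L M) := by
  rw [latSpan, quotLat, Submodule.map_coe, coe_projPerp, ← ContinuousLinearMap.coe_coe,
    Submodule.span_image]
  exact Submodule.mem_map_of_mem ht

theorem norm_add_sub_sq_eq (M : Submodule ℤ E) (x₀ t : E) {y : E} (hy : y ∈ latSpan M) :
    ‖x₀ + y - t‖ ^ 2 = dist (projPerp M t) (projPerp M x₀) ^ 2 +
      dist ((latSpan M).starProjection (t - x₀)) y ^ 2 := by
  set W := latSpan M
  have hsplit : x₀ + y - t = projPerp M (x₀ - t) + (y - W.starProjection (t - x₀)) := by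
    have := W.starProjection_add_starProjection_orthogonal (x₀ - t)
    rw [coe_projPerp, show t - x₀ = -(x₀ - t) by abel, map_neg]
    linear_combination (norm := module) -this
  have horth : ⟪projPerp M (x₀ - t), y - W.starProjection (t - x₀)⟫ = 0 :=
    Submodule.inner_left_of_mem_orthogonal (W.sub_mem hy (W.starProjection_apply_mem _))
      (Wᗮ.starProjection_apply_mem _)
  rw [dist_comm, dist_comm _ y, dist_eq_norm, dist_eq_norm, ← map_sub, hsplit, sq, sq, sq,
    norm_add_sq_eq_norm_sq_add_norm_sq_real horth]

theorem infDist_sq_le_covRad_sq_add {M N : Submodule ℤ E} (hMN : M ≤ N) (hN : N.FG) {S : ℝ}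
    (hM : ∀ s ∈ latSpan M, infDist s (M : Set E) ^ 2 ≤ S) {t : E} (ht : t ∈ latSpan N) :
    infDist t (N : Set E) ^ 2 ≤ covRad (quotLat N M) ^ 2 + S := by
  have hproj : ∀ x₀ ∈ N,
      infDist t (N : Set E) ^ 2 - S ≤ dist (projPerp M t) (projPerp M x₀) ^ 2 := by
    intro x₀ hx₀
    set s := (latSpan M).starProjection (t - x₀)
    have hcorr : infDist t (N : Set E) ^ 2 - dist (projPerp M t) (projPerp M x₀) ^ 2 ≤
        infDist s (M : Set E) ^ 2 := by
      refine le_infDist_sq_of_forall_le_dist_sq ⟨0, M.zero_mem⟩ fun y hy => ?_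
      have hdist : infDist t (N : Set E) ≤ ‖x₀ + y - t‖ := by
        rw [← dist_eq_norm, dist_comm]
        exact infDist_le_dist_of_mem (N.add_mem hx₀ (hMN hy))
      have := pow_le_pow_left₀ infDist_nonneg hdist 2
      rw [norm_add_sub_sq_eq M x₀ t (Submodule.subset_span hy)] at this
      linarith
    linarith [hM s ((latSpan M).starProjection_apply_mem _)]
  have hQ : infDist t (N : Set E) ^ 2 - S ≤ infDist (projPerp M t) (quotLat N M : Set E) ^ 2 :=
    le_infDist_sq_of_forall_le_dist_sq ⟨0, Submodule.zero_mem _⟩ fun _ ⟨x₀, hx₀, hq⟩ =>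
      hq ▸ hproj x₀ hx₀
  have hμ : infDist (projPerp M t) (quotLat N M : Set E) ≤ covRad (quotLat N M) :=
    infDist_le_covRad (hN.map _) (projPerp_mem_latSpan_quotLat N M ht)
  nlinarith [pow_le_pow_left₀ infDist_nonneg hμ 2]

theorem infDist_sq_le_sum_covRad_sq (Lc : ℕ → Submodule ℤ E) (h0 : Lc 0 = ⊥) (k : ℕ)
    (hmono : ∀ i < k, Lc i ≤ Lc (i + 1)) (hfg : ∀ i ≤ k, (Lc i).FG) {t : E}
    (ht : t ∈ latSpan (Lc k)) :
    infDist t (Lc k : Set E) ^ 2 ≤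
      ∑ i ∈ Finset.range k, covRad (quotLat (Lc (i + 1)) (Lc i)) ^ 2 := by
  induction k generalizing t with
  | zero => rw [h0] at ht ⊢; rw [infDist_bot_eq_zero_of_mem_latSpan ht]; simp
  | succ k ih =>
    have hprev : ∀ s ∈ latSpan (Lc k), infDist s (Lc k : Set E) ^ 2 ≤
        ∑ i ∈ Finset.range k, covRad (quotLat (Lc (i + 1)) (Lc i)) ^ 2 :=
      fun s hs => ih (fun i hi => hmono i (by omega)) (fun i hi => hfg i (by omega)) hs
    rw [Finset.sum_range_succ]
    exact (infDist_sq_le_covRad_sq_add (hmono k k.lt_succ_self) (hfg _ le_rfl) hprev ht).trans_eq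
      (add_comm _ _)

theorem IsLatticeOfRank.isClosed {L : Submodule ℤ E} {n : ℕ} (hL : IsLatticeOfRank L n) :
    IsClosed (L : Set E) := by
  obtain ⟨b, hb, rfl⟩ := hL
  have hb' : LinearIndepOn ℝ id (Set.range b) := (linearIndepOn_id_range_iff hb.injective).mpr hb
  let B := Module.Basis.extend hb'
  have : Finite (hb'.extend (Set.subset_univ _)) := Module.Finite.finite_basis B
  have hsub : (Submodule.span ℤ (Set.range b) : Set E) ⊆ Submodule.span ℤ (Set.range B) := by
    rw [Module.Basis.range_extend]
    exact Submodule.span_mono (hb'.subset_extend _)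
  have : DiscreteTopology (Submodule.span ℤ (Set.range b)) :=
    DiscreteTopology.of_subset (inferInstance : DiscreteTopology (Submodule.span ℤ (Set.range B)))
      hsub
  exact AddSubgroup.isClosed_of_discrete (H := (Submodule.span ℤ (Set.range b)).toAddSubgroup)

/-- Let {0} = Λ₀ ⊂ Λ₁ ⊂ ⋯ ⊂ Λ_k = Λ be a filtration of a lattice Λ
by pure sublattices, with quotient lattices Q_i = Λ_i/Λ_{i−1}. Then for every
target t ∈ span(Λ) there exists x ∈ Λ with ‖x − t‖² ≤ Σ_{i=1}^k μ(Q_i)². -/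
theorem exists_close_lattice_point_of_filtration
    {E : Type*} [NormedAddCommGroup E] [InnerProductSpace ℝ E] [FiniteDimensional ℝ E]
    (n k : ℕ) (L : Submodule ℤ E) (hL : IsLatticeOfRank L n)
    (Lc : ℕ → Submodule ℤ E)
    (h0 : Lc 0 = ⊥) (hk : Lc k = L)
    (hchain : ∀ i < k, Lc i < Lc (i + 1))
    (hpure : ∀ i ≤ k, IsPureIn (Lc i) L)
    (t : E) (ht : t ∈ latSpan L) :
    ∃ x ∈ L, ‖x - t‖ ^ 2 ≤ ∑ i ∈ Finset.range k, covRad (quotLat (Lc (i + 1)) (Lc i)) ^ 2 := by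
  obtain ⟨x, hxL, hx⟩ := hL.isClosed.exists_infDist_eq_dist ⟨0, L.zero_mem⟩ t
  refine ⟨x, hxL, ?_⟩
  rw [← dist_eq_norm, dist_comm, ← hx]
  subst hk
  exact infDist_sq_le_sum_covRad_sq Lc h0 k (fun i hi => (hchain i hi).le)
    (fun i hi => hL.fg.of_le (hpure i hi).1) ht

end
end

section
/- Let Λ be a lattice of rank n and let γ ≥ 1. Suppose there exists a complete filtration {0} = Λ₀ ⊂ Λ₁ ⊂ ⋯ ⊂ Λ_n = Λ by pure sublattices with rk(Λ_i) = i and covol(Λ_i/Λ_{i−1}) ≤ γ·λ_n(Λ) for all 1 ≤ i ≤ n. Then for every target t ∈ span(Λ) there exists a lattice vector c ∈ Λ with ‖c − t‖ ≤ (√n·γ/2)·λ_n(Λ). -/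
/-! Babai's nearest-plane argument. Projecting orthogonally to `span Λᵢ`, purity makes the image
of `Λᵢ₊₁` a rank-one lattice `ℤ g` with `‖g‖ ≤ γ λₙ`. Rounding the projection of the target to
`ℤ g` leaves an error of norm at most `‖g‖ / 2` orthogonal to `span Λᵢ`, and the remaining
component lies in `span Λᵢ`, where induction applies. By Pythagoras the squared errors add up to
at most `n (γ λₙ / 2)²`. -/

open scoped RealInnerProductSpace
open Metric

noncomputable section

variable {E : Type*} [NormedAddCommGroup E] [InnerProductSpace ℝ E] [FiniteDimensional ℝ E]

/-- The `i`-th successive minimum of a set `S`: the infimum of `r > 0` such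
that `S` contains `i` linearly independent vectors of norm at most `r`. -/
def succMin (S : Set E) (i : ℕ) : ℝ :=
  sInf {r : ℝ | 0 < r ∧ ∃ v : Fin i → E,
    (∀ j, v j ∈ S) ∧ LinearIndependent ℝ v ∧ ∀ j, ‖v j‖ ≤ r}

/-- `x` belongs to the dual lattice of `L`. -/
def MemDual (L : Submodule ℤ E) (x : E) : Prop :=
  ∀ v ∈ L, ∃ m : ℤ, ⟪x, v⟫ = (m : ℝ)

/-- The dual lattice of `L`, as a set. -/
def dualSet (L : Submodule ℤ E) : Set E := {x | MemDual L x}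

/-- The covolume of the lattice generated by `b`, as the square root of the
Gram determinant of `b`. -/
def gramVol {k : ℕ} (b : Fin k → E) : ℝ :=
  Real.sqrt (Matrix.det (Matrix.of fun i j => ⟪b i, b j⟫))

open Submodule

lemma IsLatticeOfRank.exists_basis {E : Type*} [NormedAddCommGroup E] [InnerProductSpace ℝ E]
    {L : Submodule ℤ E} {k : ℕ} (h : IsLatticeOfRank L k) :
    Nonempty (Module.Basis (Fin k) ℤ L) := by
  obtain ⟨b, hb, rfl⟩ := h
  exact ⟨Module.Basis.span (hb.restrict_scalars' ℤ)⟩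

lemma IsPureIn.of_le {E : Type*} [NormedAddCommGroup E] {L' L L'' : Submodule ℤ E}
    (h : IsPureIn L' L) (h' : L' ≤ L'') (h'' : L'' ≤ L) : IsPureIn L' L'' :=
  ⟨h', fun v hv => h.2 v (h'' hv)⟩

lemma projPerp_apply (L' : Submodule ℤ E) (x : E) :
    projPerp L' x = (latSpan L')ᗮ.starProjection x := by
  rw [starProjection_apply]; rfl

lemma projPerp_eq_zero_of_mem {L' : Submodule ℤ E} {x : E} (hx : x ∈ L') :
    projPerp L' x = 0 := by
  rw [projPerp_apply]
  exact starProjection_orthogonal_apply_eq_zero (subset_span hx)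

/-- Purity makes `L'' / L'` torsion-free of rank one, hence free of rank one, and `quotLat L'' L'`
is its image. -/
lemma IsPureIn.exists_quotLat_eq_span_singleton {L' L'' : Submodule ℤ E} {i : ℕ}
    (hpure : IsPureIn L' L'') (h' : IsLatticeOfRank L' i) (h'' : IsLatticeOfRank L'' (i + 1)) :
    ∃ g : E, quotLat L'' L' = span ℤ {g} := by
  obtain ⟨b'⟩ := h'.exists_basis
  obtain ⟨b''⟩ := h''.exists_basis
  set N : Submodule ℤ L'' := L'.comap L''.subtype
  have : Module.Finite ℤ L'' := .of_basis b''
  have : Module.IsTorsionFree ℤ (L'' ⧸ N) := .of_smul_eq_zero <| by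
    intro m q hmq
    obtain ⟨v, rfl⟩ := N.mkQ_surjective q
    rw [← map_zsmul, mkQ_apply, Quotient.mk_eq_zero] at hmq
    rw [mkQ_apply, Quotient.mk_eq_zero]
    exact or_iff_not_imp_left.mpr fun hm => hpure.2 v v.2 m hm hmq
  have hrank : Module.finrank ℤ (L'' ⧸ N) = 1 := by
    have hsum := N.finrank_quotient_add_finrank
    rw [(comapSubtypeEquivOfLe hpure.1).finrank_eq, Module.finrank_eq_card_basis b',
      Module.finrank_eq_card_basis b'', Fintype.card_fin, Fintype.card_fin] at hsum
    omega
  let b := Module.finBasisOfFinrankEq ℤ (L'' ⧸ N) hrank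
  obtain ⟨f, hf⟩ : ∃ f : L'' ⧸ N →ₗ[ℤ] E, LinearMap.range f = quotLat L'' L' := by
    refine ⟨N.liftQ (projPerp L' ∘ₗ L''.subtype) fun _ hv =>
      LinearMap.mem_ker.mpr (projPerp_eq_zero_of_mem hv), ?_⟩
    rw [range_liftQ, LinearMap.range_comp, range_subtype, quotLat]
  refine ⟨f (b 0), ?_⟩
  rw [← hf, LinearMap.range_eq_map, ← b.span_eq, Set.range_unique,
    map_span, Set.image_singleton]
  rfl

lemma projPerp_mem_span_quotLat {L' L'' : Submodule ℤ E} {t : E} (ht : t ∈ latSpan L'') :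
    projPerp L' t ∈ span ℝ (quotLat L'' L' : Set E) := by
  have himage : (quotLat L'' L' : Set E) = (latSpan L')ᗮ.starProjection '' L'' :=
    map_coe _ _
  rw [himage, projPerp_apply]
  exact image_span_subset_span _ _ ⟨t, ht, rfl⟩

lemma exists_norm_projPerp_sub_le {L' L'' : Submodule ℤ E} {g : E}
    (hg : quotLat L'' L' = span ℤ {g}) {t : E} (ht : t ∈ latSpan L'') :
    ∃ w ∈ L'', ‖projPerp L' (t - w)‖ ≤ ‖g‖ / 2 := by
  have htg : projPerp L' t ∈ span ℝ {g} := by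
    simpa only [hg, span_span_of_tower] using projPerp_mem_span_quotLat (L' := L') ht
  obtain ⟨s, hs⟩ := mem_span_singleton.mp htg
  obtain ⟨w, hw, hwg⟩ : g ∈ quotLat L'' L' := hg ▸ mem_span_singleton_self g
  refine ⟨round s • w, L''.smul_mem _ hw, ?_⟩
  rw [map_sub, map_zsmul, hwg, ← hs, ← Int.cast_smul_eq_zsmul ℝ, ← sub_smul, norm_smul,
    Real.norm_eq_abs]
  calc |s - round s| * ‖g‖ ≤ 1 / 2 * ‖g‖ := by gcongr; exact abs_sub_round s
    _ = ‖g‖ / 2 := by ring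

lemma exists_norm_sub_sq_le_of_quotLat_eq_span {L' L'' : Submodule ℤ E} (hle : L' ≤ L'')
    {g : E} (hg : quotLat L'' L' = span ℤ {g}) {D : ℝ}
    (hD : ∀ t ∈ latSpan L', ∃ c ∈ L', ‖c - t‖ ^ 2 ≤ D) :
    ∀ t ∈ latSpan L'', ∃ c ∈ L'', ‖c - t‖ ^ 2 ≤ D + (‖g‖ / 2) ^ 2 := by
  intro t ht
  set K := latSpan L'
  obtain ⟨w, hw, hwt⟩ := exists_norm_projPerp_sub_le hg ht
  rw [projPerp_apply] at hwt
  obtain ⟨c, hc, hct⟩ := hD (K.starProjection (t - w)) (K.starProjection_apply_mem _)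
  refine ⟨w + c, L''.add_mem hw (hle hc), ?_⟩
  have hsplit : w + c - t = (c - K.starProjection (t - w)) - Kᗮ.starProjection (t - w) := by
    rw [sub_sub, K.starProjection_add_starProjection_orthogonal]; abel
  have horth : ⟪c - K.starProjection (t - w), Kᗮ.starProjection (t - w)⟫ = 0 :=
    inner_right_of_mem_orthogonal (K.sub_mem (subset_span hc) (K.starProjection_apply_mem _))
      (Kᗮ.starProjection_apply_mem _)
  rw [hsplit, norm_sub_sq_real, horth]
  linarith [pow_le_pow_left₀ (norm_nonneg _) hwt 2]

lemma exists_norm_sub_sq_le_of_filtration {Lc : ℕ → Submodule ℤ E} (h0 : Lc 0 = ⊥) {n : ℕ}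
    {B : ℝ} (hmono : ∀ i < n, Lc i ≤ Lc (i + 1))
    (hgen : ∀ i < n, ∃ g, quotLat (Lc (i + 1)) (Lc i) = span ℤ {g} ∧ ‖g‖ ≤ B) :
    ∀ i ≤ n, ∀ t ∈ latSpan (Lc i), ∃ c ∈ Lc i, ‖c - t‖ ^ 2 ≤ i * (B / 2) ^ 2 := by
  intro i
  induction i with
  | zero =>
    intro _ t ht
    have ht0 : t = 0 := by simpa [latSpan, h0] using ht
    exact ⟨0, zero_mem _, by simp [ht0]⟩
  | succ i ih =>
    intro hi t ht
    have hi' : i < n := hi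
    obtain ⟨g, hg, hgB⟩ := hgen i hi'
    obtain ⟨c, hc, hct⟩ :=
      exists_norm_sub_sq_le_of_quotLat_eq_span (hmono i hi') hg (ih hi'.le) t ht
    refine ⟨c, hc, hct.trans ?_⟩
    have hg2 : (‖g‖ / 2) ^ 2 ≤ (B / 2) ^ 2 := by gcongr
    push_cast
    linarith

theorem close_vector_of_good_filtration_general
    {E : Type*} [NormedAddCommGroup E] [InnerProductSpace ℝ E] [FiniteDimensional ℝ E]
    (n : ℕ) (L : Submodule ℤ E) (γ : ℝ) (hγ : 1 ≤ γ)
    (Lc : ℕ → Submodule ℤ E)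
    (h0 : Lc 0 = ⊥) (hn : Lc n = L)
    (hchain : ∀ i < n, Lc i < Lc (i + 1))
    (hrk : ∀ i ≤ n, IsLatticeOfRank (Lc i) i)
    (hpure : ∀ i ≤ n, IsPureIn (Lc i) L)
    (hcovol : ∀ i < n, ∀ g : E,
      quotLat (Lc (i + 1)) (Lc i) = Submodule.span ℤ {g} →
      ‖g‖ ≤ γ * succMin (L : Set E) n) :
    ∀ t ∈ latSpan L, ∃ c ∈ L,
      ‖c - t‖ ≤ Real.sqrt n * γ / 2 * succMin (L : Set E) n := by
  intro t ht
  set B := γ * succMin (L : Set E) n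
  have hB : 0 ≤ B := mul_nonneg (by linarith) (Real.sInf_nonneg fun _ hr => hr.1.le)
  have hgen : ∀ i < n, ∃ g, quotLat (Lc (i + 1)) (Lc i) = span ℤ {g} ∧ ‖g‖ ≤ B := by
    intro i hi
    have hpure' : IsPureIn (Lc i) (Lc (i + 1)) :=
      (hpure i hi.le).of_le (hchain i hi).le (hpure (i + 1) hi).1
    obtain ⟨g, hg⟩ := hpure'.exists_quotLat_eq_span_singleton (hrk i hi.le) (hrk (i + 1) hi)
    exact ⟨g, hg, hcovol i hi g hg⟩
  obtain ⟨c, hc, hct⟩ := exists_norm_sub_sq_le_of_filtration h0 (fun i hi => (hchain i hi).le)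
    hgen n le_rfl t (hn ▸ ht)
  refine ⟨c, hn ▸ hc, ?_⟩
  calc ‖c - t‖ ≤ √(n * (B / 2) ^ 2) := Real.le_sqrt_of_sq_le hct
    _ = Real.sqrt n * γ / 2 * succMin (L : Set E) n := by
      rw [Real.sqrt_mul (Nat.cast_nonneg n), Real.sqrt_sq (by linarith)]; ring

/-- Let Λ be a lattice of rank n and γ ≥ 1. Suppose there is a
complete filtration {0} = Λ₀ ⊂ Λ₁ ⊂ ⋯ ⊂ Λ_n = Λ by pure sublattices with
rk(Λ_i) = i and covol(Λ_i/Λ_{i−1}) ≤ γ·λ_n(Λ) (the rank-one quotient lattices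
being generated by a vector of norm at most γ·λ_n(Λ)). Then every t ∈ span(Λ)
admits c ∈ Λ with ‖c − t‖ ≤ (√n·γ/2)·λ_n(Λ). -/
theorem close_vector_of_good_filtration
    {E : Type*} [NormedAddCommGroup E] [InnerProductSpace ℝ E] [FiniteDimensional ℝ E]
    (n : ℕ) (L : Submodule ℤ E) (hL : IsLatticeOfRank L n) (γ : ℝ) (hγ : 1 ≤ γ)
    (Lc : ℕ → Submodule ℤ E)
    (h0 : Lc 0 = ⊥) (hn : Lc n = L)
    (hchain : ∀ i < n, Lc i < Lc (i + 1))
    (hrk : ∀ i ≤ n, IsLatticeOfRank (Lc i) i)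
    (hpure : ∀ i ≤ n, IsPureIn (Lc i) L)
    (hcovol : ∀ i < n, ∀ g : E,
      quotLat (Lc (i + 1)) (Lc i) = Submodule.span ℤ {g} →
      ‖g‖ ≤ γ * succMin (L : Set E) n) :
    ∀ t ∈ latSpan L, ∃ c ∈ L,
      ‖c - t‖ ≤ Real.sqrt n * γ / 2 * succMin (L : Set E) n :=
  close_vector_of_good_filtration_general n L γ hγ Lc h0 hn hchain hrk hpure hcovol
end
end
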